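/- Define f : ℝ → ℝ by f(y) = (π/(2 y ln 10)) · sin(π · β_{11}(y)) for 1.1 ≤ y < 1.2, where β_{11}(y) = log₁₀(10y/11) / log₁₀(12/11). Then the integral of f over the interval [1.11, 1.12) is strictly less than log₁₀(1 + 1/111). Consequently, a random variable with this density on [1.1, 1.2) (extended analogously on the other two-digit intervals) is not 3-digit Benford. -/

import Mathlib

open MeasureTheory Real

/-!
On `[1.11, 1.12)` the density is at most `0.38`: its prefactor is at most `π / (2 · 1.11 · ln 10)`,
and the phase `π β₁₁(y)` lies in `[0, 0.664]`, where `sin < 0.617`. Integrating over an interval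
of length `0.01` gives at most `0.0038`, whereas `log₁₀ (112/111) ≥ 1 / (112 ln 10) > 0.0038`.
-/

theorem setIntegral_le_mul_measureReal_of_forall_le {α : Type*} [MeasurableSpace α]
    {μ : Measure α} {s : Set α} {f : α → ℝ} {C : ℝ} (hs : MeasurableSet s) (hμs : μ s ≠ ⊤)
    (hC : 0 ≤ C) (hf : ∀ x ∈ s, f x ≤ C) :
    ∫ x in s, f x ∂μ ≤ C * μ.real s := by
  by_cases hfi : IntegrableOn f s μ
  · calc ∫ x in s, f x ∂μ ≤ ∫ _ in s, C ∂μ :=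
          setIntegral_mono_on hfi (integrableOn_const hμs) hs hf
      _ = C * μ.real s := by rw [setIntegral_const, smul_eq_mul, mul_comm]
  · rw [integral_undef hfi]
    positivity

theorem logb_div_logb_eq_log_div_log {b : ℝ} (hb : log b ≠ 0) (x y : ℝ) :
    logb b x / logb b y = log x / log y :=
  div_div_div_cancel_right₀ hb _ _

theorem log_ten_gt : 2.3025 < log 10 := by
  linarith [log_ten_eq, log_two_gt_d9, log_five_gt_d9]

theorem log_ten_lt : log 10 < 2.3026 := by
  linarith [log_ten_eq, log_two_lt_d9, log_five_lt_d9]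

-- `1 - 11/12 ≤ log (12/11)` is too weak here: take two terms of the series of `-log (1 - 1/12)`.
theorem log_twelve_div_eleven_gt : 0.0861 < log (12 / 11) := by
  have h := abs_log_sub_add_sum_range_le (x := 1 / 12) (by norm_num) 2
  have h12 : log (1 - 1 / 12 : ℝ) = -log (12 / 11) := by
    rw [← log_inv]; norm_num
  rw [h12, abs_le] at h
  norm_num [Finset.sum_range_succ] at h
  linarith [h.2]

theorem sin_lt_of_nonneg_of_le {x : ℝ} (h0 : 0 ≤ x) (h : x ≤ 0.664) : sin x < 0.617 := by
  have hmono : sin x ≤ sin 0.664 :=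
    sin_le_sin_of_le_of_le_pi_div_two (by linarith [pi_pos]) (by linarith [pi_gt_three]) h
  have htaylor := sin_bound (x := 0.664) (by norm_num [abs_of_pos])
  rw [abs_le] at htaylor
  norm_num [abs_of_pos] at htaylor
  linarith [htaylor.2]

noncomputable def beta11 (y : ℝ) : ℝ :=
  logb 10 (10 * y / 11) / logb 10 (12 / 11)

theorem pi_mul_beta11_mem_Icc {y : ℝ} (h1 : 1.1 ≤ y) (h2 : y ≤ 1.12) :
    π * beta11 y ∈ Set.Icc 0 0.664 := by
  have hlog12 := log_twelve_div_eleven_gt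
  have hlog_nonneg : 0 ≤ log (10 * y / 11) := log_nonneg (by linarith)
  have hlog_le : log (10 * y / 11) ≤ 1 / 55 := by
    linarith [log_le_sub_one_of_pos (show 0 < 10 * y / 11 by linarith)]
  have hbeta : beta11 y = log (10 * y / 11) / log (12 / 11) :=
    logb_div_logb_eq_log_div_log (by linarith [log_ten_gt]) _ _
  have hbeta_le : beta11 y ≤ (1 / 55) / 0.0861 := by
    rw [hbeta]
    exact div_le_div₀ (by norm_num) hlog_le (by norm_num) hlog12.le
  have hbeta_nonneg : 0 ≤ beta11 y := hbeta ▸ div_nonneg hlog_nonneg (by linarith)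
  constructor
  · exact mul_nonneg pi_pos.le hbeta_nonneg
  · calc π * beta11 y ≤ 3.1416 * ((1 / 55) / 0.0861) :=
          mul_le_mul pi_lt_d4.le hbeta_le hbeta_nonneg (by norm_num)
      _ ≤ 0.664 := by norm_num

theorem sineDensity_le {y : ℝ} (h1 : 1.11 ≤ y) (h2 : y ≤ 1.12) :
    π / (2 * y * log 10) * sin (π * beta11 y) ≤ 0.38 := by
  obtain ⟨hphase0, hphase⟩ := pi_mul_beta11_mem_Icc (by linarith) h2
  have hsin := sin_lt_of_nonneg_of_le hphase0 hphase
  have hden : 2 * 1.11 * 2.3025 ≤ 2 * y * log 10 := by nlinarith [log_ten_gt]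
  have hprefactor : π / (2 * y * log 10) ≤ 3.1416 / (2 * 1.11 * 2.3025) :=
    div_le_div₀ (by norm_num) pi_lt_d4.le (by norm_num) hden
  have hprefactor_pos : 0 < π / (2 * y * log 10) := by
    have := log_ten_gt
    positivity
  calc π / (2 * y * log 10) * sin (π * beta11 y)
      ≤ π / (2 * y * log 10) * 0.617 := by gcongr
    _ ≤ 3.1416 / (2 * 1.11 * 2.3025) * 0.617 := by gcongr
    _ ≤ 0.38 := by norm_num

theorem logb_ten_one_add_inv_111_gt : 0.0038 < logb 10 (1 + 1 / 111) := by
  have hlog : 1 / 112 ≤ log (1 + 1 / 111) := by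
    have := one_sub_inv_le_log_of_pos (x := 1 + 1 / 111) (by norm_num)
    norm_num at this ⊢
    linarith
  calc (0.0038 : ℝ) < (1 / 112) / 2.3026 := by norm_num
    _ ≤ log (1 + 1 / 111) / log 10 :=
      div_le_div₀ (by linarith) hlog (by linarith [log_ten_gt]) log_ten_lt.le

theorem twoDigitBenford_density_not_threeDigit (f : ℝ → ℝ)
    (hf : ∀ y : ℝ, f y =
      if (1.1 : ℝ) ≤ y ∧ y < 1.2 then
        Real.pi / (2 * y * Real.log 10) *
          Real.sin (Real.pi * (Real.logb 10 (10 * y / 11) / Real.logb 10 (12 / 11)))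
      else 0) :
    (∫ y in Set.Ico (1.11 : ℝ) 1.12, f y) < Real.logb 10 (1 + 1 / 111) := by
  have hf_le : ∀ y ∈ Set.Ico (1.11 : ℝ) 1.12, f y ≤ 0.38 := by
    rintro y ⟨h1, h2⟩
    rw [hf, if_pos ⟨by linarith, by linarith⟩]
    exact sineDensity_le h1 h2.le
  calc (∫ y in Set.Ico (1.11 : ℝ) 1.12, f y)
      ≤ 0.38 * volume.real (Set.Ico (1.11 : ℝ) 1.12) :=
        setIntegral_le_mul_measureReal_of_forall_le measurableSet_Ico measure_Ico_lt_top.ne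
          (by norm_num) hf_le
    _ = 0.0038 := by rw [Real.volume_real_Ico_of_le (by norm_num)]; norm_num
    _ < logb 10 (1 + 1 / 111) := logb_ten_one_add_inv_111_gt
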